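/- Let 𝒜 ⊆ ℓ∞ be nonempty and let f : 𝒜 → ℝ be bounded below and satisfy lim_{T→∞} sup_{v∈B_T(u)} |f(x^T(u,v)) − f(u)| = 0 for every u ∈ 𝒜. Let g : 𝒜 → ℓ∞ be Uniformly Asymptotically Non-Anticipatory (UANA), suppose that for every u ∈ 𝒜 and every T̄ ∈ ℕ there exist T ≥ T̄ and v ∈ B_T(u) with limsup_{t→∞} g_t(x^T(u,v)) ≤ 0, and suppose that for every u ∈ 𝒜 the family {g(x^T(u,v)) : T ∈ ℕ, v ∈ B_T(u)} is uniformly bounded in ℓ∞. Then, with infima and suprema in the extended reals, sup_{Λ∈(ℓ∞)*₊} inf_{x∈𝒜} [f(x) + Λ(g(x))] = sup_{λ∈ℓ¹₊} inf_{x∈𝒜} [f(x) + ∑_t λ_t g_t(x)]. -/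

import Mathlib

/-!
A positive functional `Λ` on `ℓ∞` splits as `Λ = ⟨λ, ·⟩ + Λₛ` with weights `λₜ = Λ(eₜ) ∈ ℓ¹₊`
(their partial sums are bounded by `Λ 1`) and `Λₛ ≥ 0` vanishing on finitely supported
sequences; hence `Λₛ y ≤ ε Λₛ 1` as soon as `yₜ ≤ ε` eventually, so `Λ y ≤ ⟨λ, y⟩` whenever
`limsup y ≤ 0`. Given `x₀ ∈ 𝒜`, feasibility yields splices `xₙ = x^{Tₙ}(x₀, vₙ) ∈ 𝒜` with
`Tₙ → ∞` and `limsup g(xₙ) ≤ 0`, so `f(xₙ) + Λ(g(xₙ)) ≤ f(xₙ) + ⟨λ, g(xₙ)⟩`. The asymptotic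
non-anticipativity of `f` and `g`, together with dominated convergence for the uniformly bounded
`g(xₙ)`, sends the right-hand side to `f(x₀) + ⟨λ, g(x₀)⟩`. The reverse inequality holds because
every `λ ∈ ℓ¹₊` defines the positive functional `⟨λ, ·⟩`.
-/

open scoped ENNReal
open Filter

/-- The sequence `x^T(u,v)` equal to `u_t` for `t ≤ T` and to `v_t` for `t > T`,
as an element of `ℓ∞`. -/
noncomputable def splice (u v : lp (fun _ : ℕ => ℝ) ∞) (T : ℕ) : lp (fun _ : ℕ => ℝ) ∞ :=
  ⟨fun t => if t ≤ T then u t else v t, by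
    apply memℓp_infty
    refine ⟨max ‖u‖ ‖v‖, ?_⟩
    rintro r ⟨t, rfl⟩
    dsimp only
    split_ifs
    · exact le_max_of_le_left (lp.norm_apply_le_norm ENNReal.top_ne_zero u t)
    · exact le_max_of_le_right (lp.norm_apply_le_norm ENNReal.top_ne_zero v t)⟩

/-- Given `𝒜 ⊆ ℓ∞` and `u`, the set `B_T(u) = {v ∈ ℓ∞ : x^T(u,v) ∈ 𝒜}`. -/
def BT (A : Set (lp (fun _ : ℕ => ℝ) ∞)) (u : lp (fun _ : ℕ => ℝ) ∞) (T : ℕ) :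
    Set (lp (fun _ : ℕ => ℝ) ∞) :=
  {v | splice u v T ∈ A}

/-- `g : 𝒜 → ℓ∞` is Uniformly Asymptotically Non-Anticipatory:
for every coordinate `t` and every `u ∈ 𝒜`,
`lim_{T→∞} sup_{v ∈ B_T(u)} |g_t(x^T(u,v)) − g_t(u)| = 0`. -/
def UANA (A : Set (lp (fun _ : ℕ => ℝ) ∞))
    (g : lp (fun _ : ℕ => ℝ) ∞ → lp (fun _ : ℕ => ℝ) ∞) : Prop :=
  ∀ t : ℕ, ∀ u ∈ A, ∀ ε > (0 : ℝ), ∃ Tbar : ℕ, ∀ T ≥ Tbar, ∀ v ∈ BT A u T,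
    |g (splice u v T) t - g u t| ≤ ε

open Topology

local notation "ℓ∞" => lp (fun _ : ℕ => ℝ) ∞
local notation "ℓ¹" => lp (fun _ : ℕ => ℝ) 1

lemma tendsto_comp_splice {A : Set ℓ∞} {u : ℓ∞} {φ : ℓ∞ → ℝ}
    (hφ : ∀ ε > (0 : ℝ), ∃ Tbar : ℕ, ∀ T ≥ Tbar, ∀ v ∈ BT A u T, |φ (splice u v T) - φ u| ≤ ε)
    {ι : Type*} {l : Filter ι} {T : ι → ℕ} (hT : Tendsto T l atTop) {v : ι → ℓ∞}
    (hv : ∀ i, v i ∈ BT A u (T i)) :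
    Tendsto (fun i => φ (splice u (v i) (T i))) l (𝓝 (φ u)) := by
  refine Metric.tendsto_nhds.2 fun ε hε => ?_
  obtain ⟨Tbar, hTbar⟩ := hφ (ε / 2) (half_pos hε)
  filter_upwards [hT.eventually_ge_atTop Tbar] with i hi
  exact (hTbar _ hi _ (hv i)).trans_lt (half_lt_self hε)

lemma summable_norm_of_l1 (lam : ℓ¹) : Summable fun t => ‖lam t‖ := by
  simpa using (lp.memℓp lam).summable (by norm_num)

lemma norm_mul_apply_le (lam : ℓ¹) (y : ℓ∞) (t : ℕ) : ‖lam t * y t‖ ≤ ‖lam t‖ * ‖y‖ := by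
  rw [norm_mul]
  exact mul_le_mul_of_nonneg_left (lp.norm_apply_le_norm ENNReal.top_ne_zero y t) (norm_nonneg _)

lemma summable_mul_of_l1 (lam : ℓ¹) (y : ℓ∞) : Summable fun t => lam t * y t :=
  .of_norm_bounded ((summable_norm_of_l1 lam).mul_right ‖y‖) (norm_mul_apply_le lam y)

noncomputable def pairing (lam : ℓ¹) : ℓ∞ →L[ℝ] ℝ :=
  LinearMap.mkContinuous
    { toFun := fun y => ∑' t, lam t * y t
      map_add' := fun y z => by
        simp only [lp.coeFn_add, Pi.add_apply, mul_add]
        exact (summable_mul_of_l1 lam y).tsum_add (summable_mul_of_l1 lam z)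
      map_smul' := fun c y => by
        simp only [lp.coeFn_smul, Pi.smul_apply, smul_eq_mul, RingHom.id_apply, mul_left_comm]
        exact tsum_mul_left }
    (∑' t, ‖lam t‖) fun y => by
      have hsum := (summable_norm_of_l1 lam).mul_right ‖y‖
      calc ‖∑' t, lam t * y t‖ ≤ ∑' t, ‖lam t‖ * ‖y‖ :=
            tsum_of_norm_bounded hsum.hasSum (norm_mul_apply_le lam y)
        _ = (∑' t, ‖lam t‖) * ‖y‖ := tsum_mul_right

lemma pairing_apply (lam : ℓ¹) (y : ℓ∞) : pairing lam y = ∑' t, lam t * y t := rfl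

lemma pairing_nonneg {lam : ℓ¹} (hlam : ∀ t, 0 ≤ lam t) {y : ℓ∞} (hy : ∀ t, 0 ≤ y t) :
    0 ≤ pairing lam y :=
  tsum_nonneg fun t => mul_nonneg (hlam t) (hy t)

lemma tendsto_tsum_mul_of_tendsto_apply (lam : ℓ¹) {ι : Type*} {l : Filter ι} {y : ι → ℓ∞}
    {y₀ : ℓ∞} {C : ℝ} (hy : ∀ t, Tendsto (fun i => y i t) l (𝓝 (y₀ t))) (hC : ∀ i, ‖y i‖ ≤ C) :
    Tendsto (fun i => ∑' t, lam t * y i t) l (𝓝 (∑' t, lam t * y₀ t)) :=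
  tendsto_tsum_of_dominated_convergence ((summable_norm_of_l1 lam).mul_right C)
    (fun t => (hy t).const_mul (lam t))
    (Eventually.of_forall fun i t => (norm_mul_apply_le lam (y i) t).trans
      (mul_le_mul_of_nonneg_left (hC i) (norm_nonneg _)))

section PositiveFunctional

def IsPositiveFunctional (Λ : ℓ∞ →ₗ[ℝ] ℝ) : Prop :=
  ∀ y : ℓ∞, (∀ t, 0 ≤ y t) → 0 ≤ Λ y

noncomputable def truncate (y : ℓ∞) (N : ℕ) : ℓ∞ :=
  ∑ t ∈ Finset.range N, lp.single ∞ t (y t)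

lemma truncate_apply (y : ℓ∞) (N s : ℕ) : truncate y N s = if s < N then y s else 0 := by
  rw [truncate, lp.coeFn_sum, Finset.sum_apply]
  simp [Pi.single_apply]

noncomputable def weights (Λ : ℓ∞ →ₗ[ℝ] ℝ) (t : ℕ) : ℝ := Λ (lp.single ∞ t 1)

lemma apply_truncate (Λ : ℓ∞ →ₗ[ℝ] ℝ) (y : ℓ∞) (N : ℕ) :
    Λ (truncate y N) = ∑ t ∈ Finset.range N, weights Λ t * y t := by
  refine (map_sum Λ _ _).trans (Finset.sum_congr rfl fun t _ => ?_)
  rw [weights, mul_comm, ← smul_eq_mul, ← map_smul, ← lp.single_smul, smul_eq_mul, mul_one]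

variable {Λ : ℓ∞ →ₗ[ℝ] ℝ}

lemma IsPositiveFunctional.mono (hΛ : IsPositiveFunctional Λ) {y z : ℓ∞}
    (h : ∀ t, y t ≤ z t) : Λ y ≤ Λ z :=
  sub_nonneg.1 (map_sub Λ z y ▸ hΛ (z - y) fun t => sub_nonneg.2 (h t))

lemma IsPositiveFunctional.weights_nonneg (hΛ : IsPositiveFunctional Λ) (t : ℕ) :
    0 ≤ weights Λ t :=
  hΛ _ fun s => by rw [lp.single_apply, Pi.single_apply]; split_ifs <;> norm_num

lemma IsPositiveFunctional.memℓp_weights (hΛ : IsPositiveFunctional Λ) :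
    Memℓp (weights Λ) 1 := by
  refine memℓp_gen ?_
  simp only [ENNReal.toReal_one, Real.rpow_one, Real.norm_of_nonneg (hΛ.weights_nonneg _)]
  refine summable_of_sum_range_le (c := Λ 1) hΛ.weights_nonneg fun n => ?_
  have h := apply_truncate Λ 1 n
  simp only [lp.infty_coeFn_one, Pi.one_apply, mul_one] at h
  exact h ▸ hΛ.mono fun s => by
    rw [truncate_apply]; split_ifs <;> simp [lp.infty_coeFn_one]

noncomputable def IsPositiveFunctional.weightsL1 (hΛ : IsPositiveFunctional Λ) : ℓ¹ :=
  ⟨weights Λ, hΛ.memℓp_weights⟩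

lemma IsPositiveFunctional.pairing_weightsL1_le (hΛ : IsPositiveFunctional Λ) {y : ℓ∞}
    (hy : ∀ t, 0 ≤ y t) : pairing hΛ.weightsL1 y ≤ Λ y :=
  Real.tsum_le_of_sum_range_le (fun t => mul_nonneg (hΛ.weights_nonneg t) (hy t)) fun n =>
    apply_truncate Λ y n ▸ hΛ.mono fun s => by
      rw [truncate_apply]; split_ifs <;> simp [hy s]

lemma IsPositiveFunctional.pairing_weightsL1_truncate (hΛ : IsPositiveFunctional Λ) (y : ℓ∞)
    (N : ℕ) :
    pairing hΛ.weightsL1 (truncate y N) = Λ (truncate y N) := by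
  rw [apply_truncate, pairing_apply, tsum_eq_sum (s := Finset.range N)]
  · refine Finset.sum_congr rfl fun t ht => ?_
    rw [truncate_apply, if_pos (Finset.mem_range.1 ht)]
    rfl
  · intro t ht
    rw [truncate_apply, if_neg (mt Finset.mem_range.2 ht), mul_zero]

lemma isBoundedUnder_le_apply (y : ℓ∞) : IsBoundedUnder (· ≤ ·) atTop fun t => y t :=
  isBoundedUnder_of ⟨‖y‖, fun t =>
    (Real.le_norm_self _).trans (lp.norm_apply_le_norm ENNReal.top_ne_zero y t)⟩

lemma IsPositiveFunctional.apply_nonpos_of_limsup_nonpos {D : ℓ∞ →ₗ[ℝ] ℝ}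
    (hD : IsPositiveFunctional D) (hD₀ : ∀ y N, D (truncate y N) = 0) {y : ℓ∞}
    (hy : limsup (fun t => y t) atTop ≤ 0) : D y ≤ 0 := by
  have hle : ∀ ε > (0 : ℝ), D y ≤ ε * D 1 := fun ε hε => by
    obtain ⟨N, hN⟩ := eventually_atTop.1
      (eventually_lt_of_limsup_lt (hy.trans_lt hε) (isBoundedUnder_le_apply y))
    calc D y = D (y - truncate y N) := by rw [map_sub, hD₀, sub_zero]
      _ ≤ D (ε • 1) := hD.mono fun t => by
          simp only [lp.coeFn_sub, Pi.sub_apply, truncate_apply, lp.coeFn_smul,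
            lp.infty_coeFn_one, Pi.smul_apply, Pi.one_apply, smul_eq_mul, mul_one]
          split_ifs with ht
          · simpa using hε.le
          · simpa using (hN t (not_lt.1 ht)).le
      _ = ε * D 1 := by rw [map_smul, smul_eq_mul]
  have hlim : Tendsto (fun ε : ℝ => ε * D 1) (𝓝[>] 0) (𝓝 0) := by
    refine Tendsto.mono_left ?_ nhdsWithin_le_nhds
    simpa using (tendsto_id (x := 𝓝 (0 : ℝ))).mul_const (D 1)
  exact ge_of_tendsto hlim (eventually_nhdsWithin_of_forall hle)

lemma IsPositiveFunctional.apply_le_tsum_weights_mul (hΛ : IsPositiveFunctional Λ) {y : ℓ∞}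
    (hy : limsup (fun t => y t) atTop ≤ 0) : Λ y ≤ ∑' t, weights Λ t * y t := by
  have hD : IsPositiveFunctional (Λ - (pairing hΛ.weightsL1).toLinearMap) := fun z hz =>
    sub_nonneg.2 (hΛ.pairing_weightsL1_le hz)
  have hD₀ : ∀ z N, (Λ - (pairing hΛ.weightsL1).toLinearMap) (truncate z N) = 0 := fun z N =>
    sub_eq_zero.2 (hΛ.pairing_weightsL1_truncate z N).symm
  exact sub_nonpos.1 (hD.apply_nonpos_of_limsup_nonpos hD₀ hy)

end PositiveFunctional

theorem stmt8_general (A : Set (lp (fun _ : ℕ => ℝ) ∞))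
    (f : lp (fun _ : ℕ => ℝ) ∞ → ℝ)
    (hf : ∀ u ∈ A, ∀ ε > (0 : ℝ), ∃ Tbar : ℕ, ∀ T ≥ Tbar, ∀ v ∈ BT A u T,
      |f (splice u v T) - f u| ≤ ε)
    (g : lp (fun _ : ℕ => ℝ) ∞ → lp (fun _ : ℕ => ℝ) ∞)
    (hUANA : UANA A g)
    (hfeas : ∀ u ∈ A, ∀ Tbar : ℕ, ∃ T ≥ Tbar, ∃ v ∈ BT A u T,
      Filter.limsup (fun t : ℕ => g (splice u v T) t) atTop ≤ 0)
    (hbdd : ∀ u ∈ A, ∃ C : ℝ, ∀ T : ℕ, ∀ v ∈ BT A u T, ‖g (splice u v T)‖ ≤ C) :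
    (⨆ (Λ : lp (fun _ : ℕ => ℝ) ∞ →L[ℝ] ℝ)
        (_ : ∀ y : lp (fun _ : ℕ => ℝ) ∞, (∀ t, 0 ≤ y t) → 0 ≤ Λ y),
        ⨅ x ∈ A, ((f x + Λ (g x) : ℝ) : EReal))
      = ⨆ (lam : lp (fun _ : ℕ => ℝ) 1) (_ : ∀ t, 0 ≤ lam t),
        ⨅ x ∈ A, ((f x + ∑' t, lam t * g x t : ℝ) : EReal) := by
  refine le_antisymm (iSup₂_le fun Λ hΛ => ?_)
    (iSup₂_le fun lam hlam => le_iSup₂_of_le (pairing lam) (fun _ => pairing_nonneg hlam) le_rfl)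
  have hΛ' : IsPositiveFunctional (Λ : ℓ∞ →ₗ[ℝ] ℝ) := hΛ
  refine le_iSup₂_of_le hΛ'.weightsL1 hΛ'.weights_nonneg (le_iInf₂ fun x₀ hx₀ => ?_)
  choose T hT v hv hlimsup using hfeas x₀ hx₀
  have hT_lim : Tendsto T atTop atTop := tendsto_atTop_mono hT tendsto_id
  obtain ⟨C, hC⟩ := hbdd x₀ hx₀
  have hlim := (tendsto_comp_splice (hf x₀ hx₀) hT_lim hv).add
    (tendsto_tsum_mul_of_tendsto_apply hΛ'.weightsL1
      (fun t => tendsto_comp_splice (φ := fun x => g x t) (hUANA t x₀ hx₀) hT_lim hv)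
      fun n => hC _ _ (hv n))
  refine ge_of_tendsto (EReal.tendsto_coe.2 hlim) (Eventually.of_forall fun n => ?_)
  exact (iInf₂_le (splice x₀ (v n) (T n)) (hv n)).trans <| EReal.coe_le_coe_iff.2 <|
    add_le_add_right (hΛ'.apply_le_tsum_weights_mul (hlimsup n)) _

/-- Let `𝒜 ⊆ ℓ∞` be nonempty, `f : 𝒜 → ℝ` bounded below with
`lim_{T→∞} sup_{v∈B_T(u)} |f(x^T(u,v)) − f(u)| = 0` for all `u ∈ 𝒜`, and let
`g : 𝒜 → ℓ∞` be UANA, uniformly bounded along splices, and such that beyond every `T̄`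
there is a splice whose constraint values have nonpositive limsup. Then
`sup_{Λ∈(ℓ∞)*₊} inf_{x∈𝒜} [f(x) + Λ(g(x))] = sup_{λ∈ℓ¹₊} inf_{x∈𝒜} [f(x) + ∑_t λ_t g_t(x)]`. -/
theorem stmt8 (A : Set (lp (fun _ : ℕ => ℝ) ∞)) (hA : A.Nonempty)
    (f : lp (fun _ : ℕ => ℝ) ∞ → ℝ)
    (M : ℝ) (hfbdd : ∀ x ∈ A, M ≤ f x)
    (hf : ∀ u ∈ A, ∀ ε > (0 : ℝ), ∃ Tbar : ℕ, ∀ T ≥ Tbar, ∀ v ∈ BT A u T,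
      |f (splice u v T) - f u| ≤ ε)
    (g : lp (fun _ : ℕ => ℝ) ∞ → lp (fun _ : ℕ => ℝ) ∞)
    (hUANA : UANA A g)
    (hfeas : ∀ u ∈ A, ∀ Tbar : ℕ, ∃ T ≥ Tbar, ∃ v ∈ BT A u T,
      Filter.limsup (fun t : ℕ => g (splice u v T) t) atTop ≤ 0)
    (hbdd : ∀ u ∈ A, ∃ C : ℝ, ∀ T : ℕ, ∀ v ∈ BT A u T, ‖g (splice u v T)‖ ≤ C) :
    (⨆ (Λ : lp (fun _ : ℕ => ℝ) ∞ →L[ℝ] ℝ)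
        (_ : ∀ y : lp (fun _ : ℕ => ℝ) ∞, (∀ t, 0 ≤ y t) → 0 ≤ Λ y),
        ⨅ x ∈ A, ((f x + Λ (g x) : ℝ) : EReal))
      = ⨆ (lam : lp (fun _ : ℕ => ℝ) 1) (_ : ∀ t, 0 ≤ lam t),
        ⨅ x ∈ A, ((f x + ∑' t, lam t * g x t : ℝ) : EReal) :=
  stmt8_general A f hf g hUANA hfeas hbdd
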